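/- Consider minimizing (w_{i+2} − w_{i+1})² + (w_{i+1} − w_i)² over w_{i+1} ∈ [ỹ_{i+1} − α̃_{i+1}γ, ỹ_{i+1} + α̃_{i+1}γ], with w_i = ỹ_i + α̃_i γ and w_{i+2} = ỹ_{i+2} + α̃_{i+2} γ fixed. If |ỹ_{i+2} − 2ỹ_{i+1} + ỹ_i| < (α̃_{i+2} − 2α̃_{i+1} + α̃_i)γ, then the minimizer is w_{i+1} = ỹ_{i+1} + α̃_{i+1}γ, i.e., the middle point touches its right boundary. -/
import Mathlib

/-- If the two outer points touch their right boundaries and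
`|ỹ_{i+2} − 2ỹ_{i+1} + ỹ_i| < (α̃_{i+2} − 2α̃_{i+1} + α̃_i)γ`, then the sandwiched
middle point of the two-spring problem touches its right boundary: the right
boundary is the unique minimizer of the energy over the middle interval. -/
theorem middle_point_touches_right_boundary
    (γ yi yi1 yi2 ai ai1 ai2 : ℝ) (hγ : 0 < γ)
    (hai : 0 ≤ ai) (hai1 : 0 ≤ ai1) (hai2 : 0 ≤ ai2)
    (hconv : 0 < ai2 - 2 * ai1 + ai)
    (hcond : |yi2 - 2 * yi1 + yi| < (ai2 - 2 * ai1 + ai) * γ) :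
    ∀ w ∈ Set.Icc (yi1 - ai1 * γ) (yi1 + ai1 * γ), w ≠ yi1 + ai1 * γ →
      ((yi2 + ai2 * γ) - (yi1 + ai1 * γ)) ^ 2 + ((yi1 + ai1 * γ) - (yi + ai * γ)) ^ 2
        < ((yi2 + ai2 * γ) - w) ^ 2 + (w - (yi + ai * γ)) ^ 2 := by
  intro w hw hne
  obtain ⟨h1, h2⟩ := hw
  have h2' : w < yi1 + ai1 * γ := lt_of_le_of_ne h2 hne
  obtain ⟨hL, hR⟩ := abs_lt.mp hcond
  nlinarith [sq_nonneg (w - (yi1 + ai1 * γ)), mul_pos hconv hγ]
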